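/- The polynomial P(x) = 6250x^8 − 15750x^7 + 27125x^6 − 41175x^5 + 36030x^4 − 34560x^3 + 17248x^2 − 9216x + 2048 satisfies P(0) > 0, P(1) < 0 and P(2) > 0; consequently P has at least two distinct positive real roots, one in the open interval (0, 1) and one in the open interval (1, 2). -/

import Mathlib

noncomputable def P (x : ℝ) : ℝ :=
  6250*x^8 - 15750*x^7 + 27125*x^6 - 41175*x^5 + 36030*x^4
  - 34560*x^3 + 17248*x^2 - 9216*x + 2048

theorem continuous_P : Continuous P := by
  unfold P
  fun_prop

theorem P_zero : P 0 = 2048 := by norm_num [P]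

theorem P_one : P 1 = -12000 := by norm_num [P]

theorem P_two : P 2 = 355008 := by norm_num [P]

theorem stmt_11 :
    0 < P 0 ∧ P 1 < 0 ∧ 0 < P 2 ∧
    ∃ a b : ℝ, 0 < a ∧ a < 1 ∧ P a = 0 ∧ 1 < b ∧ b < 2 ∧ P b = 0 := by
  have hP0 : 0 < P 0 := by norm_num [P_zero]
  have hP1 : P 1 < 0 := by norm_num [P_one]
  have hP2 : 0 < P 2 := by norm_num [P_two]
  obtain ⟨a, ⟨ha₀, ha₁⟩, hPa⟩ :=
    intermediate_value_Ioo' zero_le_one continuous_P.continuousOn ⟨hP1, hP0⟩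
  obtain ⟨b, ⟨hb₁, hb₂⟩, hPb⟩ :=
    intermediate_value_Ioo one_le_two continuous_P.continuousOn ⟨hP1, hP2⟩
  exact ⟨hP0, hP1, hP2, a, b, ha₀, ha₁, hPa, hb₁, hb₂, hPb⟩
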